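/- Let k' be a positive odd integer and let ξ ∈ ℤ^l. Then for all (τ,z,t) ∈ ℍ × ℂ^l × ℂ: A^{k'}_ξ(τ+1, z, t) = e^{πi(∑_{i=1}^l ξ_i²)/k'} · C^{k'}_ξ(τ, z, t) and C^{k'}_ξ(τ+1, z, t) = e^{πi(∑_{i=1}^l ξ_i²)/k'} · A^{k'}_ξ(τ, z, t). (These are the T-transformation laws of Lemmas on the type-II anti-invariant A_{λ+ρ}∘(φ^{(II)})^{-1} and twisted invariant A^ψ_{λ+ρ}∘(φ^{(II)})^{-1}, with ξ = π^{(II)}(λ+ρ) and k' = k+2l+1 for λ of even level k.) -/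
import Mathlib


open scoped BigOperators
open Finset

noncomputable section

/-- The hyperoctahedral group `H_l`: pairs `(σ, s)` of a permutation of `{1,…,l}`
and a sign vector `s ∈ {±1}^l`. -/
abbrev HL (l : ℕ) := Equiv.Perm (Fin l) × (Fin l → ℤˣ)

/-- The action of `H_l` on vectors: `(u·ν)_i = s_i · ν_{σ⁻¹(i)}`. -/
def actH {l : ℕ} (u : HL l) (ν : Fin l → ℝ) : Fin l → ℝ :=
  fun i => ((u.2 i : ℤ) : ℝ) * ν (u.1⁻¹ i)

/-- `det(u) = sgn(σ) · s_1 ⋯ s_l`. -/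
def detH {l : ℕ} (u : HL l) : ℤ :=
  (Equiv.Perm.sign u.1 : ℤ) * ∏ i, (u.2 i : ℤ)

/-- The theta series
`Θ^{k'}_ν(τ,z,t) = e^{2πik't} ∑_{γ∈ℤ^l} exp(πik'τ ∑ (γ_i+ν_i/k')² + 2πik' ∑ (γ_i+ν_i/k')z_i)`. -/
def Theta (l k' : ℕ) (ν : Fin l → ℝ) (τ : ℂ) (z : Fin l → ℂ) (t : ℂ) : ℂ :=
  Complex.exp (2 * (Real.pi : ℂ) * Complex.I * (k' : ℂ) * t) *
    ∑' γ : Fin l → ℤ,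
      Complex.exp ((Real.pi : ℂ) * Complex.I * (k' : ℂ) * τ *
          (∑ i, ((γ i : ℂ) + (ν i : ℂ) / (k' : ℂ)) ^ 2)
        + 2 * (Real.pi : ℂ) * Complex.I * (k' : ℂ) *
          (∑ i, ((γ i : ℂ) + (ν i : ℂ) / (k' : ℂ)) * z i))

/-- The twisted theta series `Θ^{ψ,k'}_ν`: the same sum with the extra sign
`(−1)^{γ_1+⋯+γ_l}`. -/
def ThetaPsi (l k' : ℕ) (ν : Fin l → ℝ) (τ : ℂ) (z : Fin l → ℂ) (t : ℂ) : ℂ :=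
  Complex.exp (2 * (Real.pi : ℂ) * Complex.I * (k' : ℂ) * t) *
    ∑' γ : Fin l → ℤ,
      (-1 : ℂ) ^ (∑ i, γ i) *
      Complex.exp ((Real.pi : ℂ) * Complex.I * (k' : ℂ) * τ *
          (∑ i, ((γ i : ℂ) + (ν i : ℂ) / (k' : ℂ)) ^ 2)
        + 2 * (Real.pi : ℂ) * Complex.I * (k' : ℂ) *
          (∑ i, ((γ i : ℂ) + (ν i : ℂ) / (k' : ℂ)) * z i))

/-- The anti-invariant `A^{k'}_ν = ∑_{u∈H_l} det(u)·Θ^{k'}_{u·ν}`. -/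
def AA (l k' : ℕ) (ν : Fin l → ℝ) (τ : ℂ) (z : Fin l → ℂ) (t : ℂ) : ℂ :=
  ∑ u : HL l, (detH u : ℂ) * Theta l k' (actH u ν) τ z t

/-- The type-I twisted invariant `B^{k'}_ν = ∑_{u=(σ,s)∈H_l} sgn(σ)·Θ^{ψ,k'}_{u·ν}`. -/
def BB (l k' : ℕ) (ν : Fin l → ℝ) (τ : ℂ) (z : Fin l → ℂ) (t : ℂ) : ℂ :=
  ∑ u : HL l, ((Equiv.Perm.sign u.1 : ℤ) : ℂ) * ThetaPsi l k' (actH u ν) τ z t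

/-- The type-II twisted invariant `C^{k'}_ν = ∑_{u∈H_l} det(u)·Θ^{ψ,k'}_{u·ν}`. -/
def CC (l k' : ℕ) (ν : Fin l → ℝ) (τ : ℂ) (z : Fin l → ℂ) (t : ℂ) : ℂ :=
  ∑ u : HL l, (detH u : ℂ) * ThetaPsi l k' (actH u ν) τ z t

/-- `ρ^B = (l − 1/2, l − 3/2, …, 3/2, 1/2)`. -/
def rhoB (l : ℕ) : Fin l → ℝ := fun i => (l : ℝ) - (i : ℝ) - 1/2

/-- `ρ^C = (l, l−1, …, 2, 1)`. -/
def rhoC (l : ℕ) : Fin l → ℝ := fun i => (l : ℝ) - (i : ℝ)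

/-- `Box_k = {ξ ∈ ℤ^l : k/2 ≥ ξ_1 ≥ ⋯ ≥ ξ_l ≥ 0}` (for `k` even). -/
def Box (l : ℕ) (k : ℕ) : Set (Fin l → ℤ) :=
  {ξ | (∀ i j : Fin l, i ≤ j → ξ j ≤ ξ i) ∧ (∀ i, 0 ≤ ξ i) ∧ (∀ i, 2 * ξ i ≤ (k : ℤ))}

/-- The principal branch `(τ/i)^e = exp(e·Log(τ/i))`. -/
def pBranch (τ : ℂ) (e : ℝ) : ℂ := Complex.exp ((e : ℂ) * Complex.log (τ / Complex.I))

/-- The S-matrix coefficient `∑_{u∈H_l} det(u)·exp(−(2πi/k')·⟨u·a, b⟩)`. -/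
def Sdet (l k' : ℕ) (a b : Fin l → ℝ) : ℂ :=
  ∑ u : HL l, (detH u : ℂ) *
    Complex.exp (-(2 * (Real.pi : ℂ) * Complex.I / (k' : ℂ)) *
      ∑ i, ((actH u a i : ℝ) : ℂ) * (b i : ℂ))

/-- The S-matrix coefficient `∑_{u=(σ,s)∈H_l} sgn(σ)·exp(−(2πi/k')·⟨u·a, b⟩)`. -/
def Ssgn (l k' : ℕ) (a b : Fin l → ℝ) : ℂ :=
  ∑ u : HL l, ((Equiv.Perm.sign u.1 : ℤ) : ℂ) *
    Complex.exp (-(2 * (Real.pi : ℂ) * Complex.I / (k' : ℂ)) *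
      ∑ i, ((actH u a i : ℝ) : ℂ) * (b i : ℂ))

lemma even_sq_sub (n : ℤ) : Even (n ^ 2 - n) := by
  have h := Int.even_mul_succ_self (n - 1)
  have h2 : (n - 1) * (n - 1 + 1) = n ^ 2 - n := by ring
  rwa [h2] at h

lemma neg_one_zpow_eq_of_even_sub {a b : ℤ} (h : Even (a - b)) :
    (-1 : ℂ) ^ a = (-1 : ℂ) ^ b := by
  obtain ⟨c, hc⟩ := h
  have ha : a = b + 2 * c := by linarith
  rw [ha, zpow_add₀ (by norm_num : (-1 : ℂ) ≠ 0), zpow_mul]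
  norm_num

lemma signCancel (n : ℤ) (x y : ℂ) :
    (-1 : ℂ) ^ n * (x * ((-1 : ℂ) ^ n * y)) = x * y := by
  have hsq : (-1 : ℂ) ^ n * (-1 : ℂ) ^ n = 1 := by
    rw [← zpow_add₀ (by norm_num : (-1 : ℂ) ≠ 0)]
    rw [show n + n = 2 * n by ring, zpow_mul]
    norm_num
  calc (-1 : ℂ) ^ n * (x * ((-1 : ℂ) ^ n * y))
      = ((-1 : ℂ) ^ n * (-1 : ℂ) ^ n) * (x * y) := by ring
    _ = x * y := by rw [hsq, one_mul]

lemma term_key (l k' : ℕ) (hodd : Odd k') (hpos : 0 < k') (m γ : Fin l → ℤ) (τ L : ℂ) :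
    Complex.exp ((Real.pi : ℂ) * Complex.I * (k' : ℂ) * (τ + 1) *
        (∑ i, ((γ i : ℂ) + (m i : ℂ) / (k' : ℂ)) ^ 2) + L)
    = Complex.exp ((Real.pi : ℂ) * Complex.I * (∑ i, (m i : ℂ) ^ 2) / (k' : ℂ)) *
        ((-1 : ℂ) ^ (∑ i, γ i) *
         Complex.exp ((Real.pi : ℂ) * Complex.I * (k' : ℂ) * τ *
            (∑ i, ((γ i : ℂ) + (m i : ℂ) / (k' : ℂ)) ^ 2) + L)) := by
  have hk : (k' : ℂ) ≠ 0 := Nat.cast_ne_zero.2 hpos.ne'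
  set S : ℂ := ∑ i, ((γ i : ℂ) + (m i : ℂ) / (k' : ℂ)) ^ 2 with hSdef
  set N : ℤ := (k' : ℤ) * (∑ i, (γ i) ^ 2) + 2 * ∑ i, γ i * m i with hNdef
  have hS' : (k' : ℂ) * S = (∑ i, (m i : ℂ) ^ 2) / (k' : ℂ) + (N : ℂ) := by
    have h1 : (k' : ℂ) * S = ∑ i, ((k' : ℂ) * (γ i : ℂ) ^ 2
        + 2 * ((γ i : ℂ) * (m i : ℂ)) + (m i : ℂ) ^ 2 / (k' : ℂ)) := by
      rw [hSdef, Finset.mul_sum]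
      refine Finset.sum_congr rfl fun i _ => ?_
      field_simp
      ring
    rw [h1, hNdef]
    push_cast
    rw [Finset.sum_add_distrib, Finset.sum_add_distrib, Finset.sum_div,
        ← Finset.mul_sum, ← Finset.mul_sum]
    ring
  have hsplit : (Real.pi : ℂ) * Complex.I * (k' : ℂ) * (τ + 1) * S + L
      = ((Real.pi : ℂ) * Complex.I * (∑ i, (m i : ℂ) ^ 2) / (k' : ℂ))
        + ((N : ℂ) * ((Real.pi : ℂ) * Complex.I)
        + ((Real.pi : ℂ) * Complex.I * (k' : ℂ) * τ * S + L)) := by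
    have h2 : (Real.pi : ℂ) * Complex.I * (k' : ℂ) * (τ + 1) * S
        = (Real.pi : ℂ) * Complex.I * (k' : ℂ) * τ * S
          + (Real.pi : ℂ) * Complex.I * ((k' : ℂ) * S) := by ring
    rw [h2, hS']
    ring
  rw [hsplit, Complex.exp_add, Complex.exp_add]
  congr 1
  congr 1
  rw [Complex.exp_int_mul]
  rw [Complex.exp_pi_mul_I]
  have hpar : Even (N - ∑ i, γ i) := by
    obtain ⟨a, ha⟩ := hodd
    have hk' : (k' : ℤ) = 2 * (a : ℤ) + 1 := by exact_mod_cast ha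
    have hd : N - ∑ i, γ i
        = 2 * ((a : ℤ) * ∑ i, (γ i) ^ 2 + ∑ i, γ i * m i)
          + ∑ i, ((γ i) ^ 2 - γ i) := by
      rw [hNdef, hk', Finset.sum_sub_distrib]; ring
    rw [hd]
    exact (even_two_mul _).add
      (Finset.sum_induction _ Even (fun a b => Even.add) Even.zero
        (fun i _ => even_sq_sub (γ i)))
  exact neg_one_zpow_eq_of_even_sub hpar

lemma thetaA (l k' : ℕ) (hodd : Odd k') (hpos : 0 < k') (m : Fin l → ℤ) (τ : ℂ)
    (z : Fin l → ℂ) (t : ℂ) :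
    Theta l k' (fun i => (m i : ℝ)) (τ + 1) z t
      = Complex.exp ((Real.pi : ℂ) * Complex.I * (∑ i, (m i : ℂ) ^ 2) / (k' : ℂ)) *
        ThetaPsi l k' (fun i => (m i : ℝ)) τ z t := by
  unfold Theta ThetaPsi
  simp only [Complex.ofReal_intCast]
  rw [show ∀ (c T E T2 : ℂ), T = E * T2 → c * T = E * (c * T2) from
    fun c T E T2 h => by rw [h]; ring]
  rw [← tsum_mul_left]
  exact tsum_congr fun γ => term_key l k' hodd hpos m γ τ _

lemma thetaC (l k' : ℕ) (hodd : Odd k') (hpos : 0 < k') (m : Fin l → ℤ) (τ : ℂ)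
    (z : Fin l → ℂ) (t : ℂ) :
    ThetaPsi l k' (fun i => (m i : ℝ)) (τ + 1) z t
      = Complex.exp ((Real.pi : ℂ) * Complex.I * (∑ i, (m i : ℂ) ^ 2) / (k' : ℂ)) *
        Theta l k' (fun i => (m i : ℝ)) τ z t := by
  unfold Theta ThetaPsi
  simp only [Complex.ofReal_intCast]
  rw [show ∀ (c T E T2 : ℂ), T = E * T2 → c * T = E * (c * T2) from
    fun c T E T2 h => by rw [h]; ring]
  rw [← tsum_mul_left]
  refine tsum_congr fun γ => ?_
  rw [term_key l k' hodd hpos m γ τ _]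
  exact signCancel (∑ i, γ i) _ _

/-- T-transformation laws of the type-II invariants for integral `ξ`:
`A^{k'}_ξ(τ+1,z,t) = e^{πi(∑ξ_i²)/k'}·C^{k'}_ξ(τ,z,t)` and
`C^{k'}_ξ(τ+1,z,t) = e^{πi(∑ξ_i²)/k'}·A^{k'}_ξ(τ,z,t)`. -/
theorem stmt10 (l : ℕ) (hl : 1 ≤ l) (k' : ℕ) (hodd : Odd k') (hpos : 0 < k')
    (ξ : Fin l → ℤ) (τ : ℂ) (hτ : 0 < τ.im) (z : Fin l → ℂ) (t : ℂ) :
    AA l k' (fun i => (ξ i : ℝ)) (τ + 1) z t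
      = Complex.exp ((Real.pi : ℂ) * Complex.I * (∑ i, ((ξ i : ℤ) : ℂ) ^ 2) / (k' : ℂ)) *
        CC l k' (fun i => (ξ i : ℝ)) τ z t ∧
    CC l k' (fun i => (ξ i : ℝ)) (τ + 1) z t
      = Complex.exp ((Real.pi : ℂ) * Complex.I * (∑ i, ((ξ i : ℤ) : ℂ) ^ 2) / (k' : ℂ)) *
        AA l k' (fun i => (ξ i : ℝ)) τ z t := by
  have key : ∀ u : HL l,
      actH u (fun i => (ξ i : ℝ))
        = (fun i => (((u.2 i : ℤ) * ξ (u.1⁻¹ i) : ℤ) : ℝ)) := by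
    intro u; funext i; simp only [actH]; push_cast; ring
  have hsum : ∀ u : HL l,
      (∑ i, (((u.2 i : ℤ) * ξ (u.1⁻¹ i) : ℤ) : ℂ) ^ 2) = ∑ i, ((ξ i : ℤ) : ℂ) ^ 2 := by
    intro u
    have h1 : ∀ i : Fin l, (((u.2 i : ℤ) * ξ (u.1⁻¹ i) : ℤ) : ℂ) ^ 2
        = ((ξ (u.1⁻¹ i) : ℤ) : ℂ) ^ 2 := by
      intro i
      rcases Int.units_eq_one_or (u.2 i) with h | h <;> rw [h] <;> push_cast <;> ring
    rw [Finset.sum_congr rfl fun i _ => h1 i]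
    exact Equiv.sum_comp u.1⁻¹ fun j => ((ξ j : ℤ) : ℂ) ^ 2
  constructor
  · unfold AA CC
    rw [Finset.mul_sum]
    refine Finset.sum_congr rfl fun u _ => ?_
    rw [key u, thetaA l k' hodd hpos _ τ z t, hsum u]
    ring
  · unfold AA CC
    rw [Finset.mul_sum]
    refine Finset.sum_congr rfl fun u _ => ?_
    rw [key u, thetaC l k' hodd hpos _ τ z t, hsum u]
    ring
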